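/- The sum of the fourth powers of the roots of the monic probabilists' Hermite polynomial H_n equals 2n^3 - 5n^2 + 3n. -/

import Mathlib

open Polynomial Filter Real Topology

/-- The monic probabilists' Hermite polynomials. -/
noncomputable def hermiteP : ℕ → Polynomial ℝ
  | 0 => 1
  | 1 => X
  | (n + 2) => X * hermiteP (n + 1) - C ((n : ℝ) + 1) * hermiteP n

lemma hermiteP_zero : hermiteP 0 = 1 := rfl

lemma hermiteP_one : hermiteP 1 = X := rfl

lemma hermiteP_add_two (n : ℕ) :
    hermiteP (n + 2) = X * hermiteP (n + 1) - C ((n : ℝ) + 1) * hermiteP n := by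
  rw [hermiteP]

lemma hermiteP_monic_natDegree (n : ℕ) :
    (hermiteP n).Monic ∧ (hermiteP n).natDegree = n := by
  induction n using Nat.strong_induction_on with
  | _ n ih =>
    match n with
    | 0 => rw [hermiteP_zero]; exact ⟨monic_one, natDegree_one⟩
    | 1 => rw [hermiteP_one]; exact ⟨monic_X, natDegree_X⟩
    | (n+2) =>
      obtain ⟨h1m, h1d⟩ := ih (n+1) (by omega)
      obtain ⟨h0m, h0d⟩ := ih n (by omega)
      have hXm : (X * hermiteP (n+1)).Monic := monic_X.mul h1m
      have hXd : (X * hermiteP (n+1)).natDegree = n + 2 := by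
        rw [natDegree_mul X_ne_zero h1m.ne_zero, natDegree_X, h1d]; omega
      have hCd : (C ((n : ℝ) + 1) * hermiteP n).natDegree ≤ n :=
        le_trans (natDegree_mul_le) (by rw [natDegree_C, h0d]; omega)
      have hnd : (C ((n : ℝ) + 1) * hermiteP n).natDegree <
          (X * hermiteP (n+1)).natDegree := by omega
      rw [hermiteP_add_two]
      exact ⟨hXm.sub_of_left (degree_lt_degree hnd),
        by rw [natDegree_sub_eq_left_of_natDegree_lt hnd, hXd]⟩

lemma hermiteP_monic (n : ℕ) : (hermiteP n).Monic := (hermiteP_monic_natDegree n).1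

lemma hermiteP_natDegree (n : ℕ) : (hermiteP n).natDegree = n := (hermiteP_monic_natDegree n).2

lemma hermiteP_ne_zero (n : ℕ) : hermiteP n ≠ 0 := (hermiteP_monic n).ne_zero

lemma hermiteP_derivative (n : ℕ) :
    derivative (hermiteP (n + 1)) = C ((n : ℝ) + 1) * hermiteP n := by
  induction n using Nat.strong_induction_on with
  | _ n ih =>
    match n with
    | 0 => rw [hermiteP_one, hermiteP_zero]; simp
    | 1 =>
      rw [show (1:ℕ)+1 = 2 by rfl, show (2:ℕ) = 0+2 by rfl, hermiteP_add_two,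
        hermiteP_one, hermiteP_zero]
      simp [derivative_mul]
      ring
    | (n+2) =>
      rw [show n+2+1 = (n+1)+2 by ring, hermiteP_add_two (n+1), derivative_sub,
        derivative_mul, derivative_mul, derivative_X, derivative_C,
        ih (n+1) (by omega), ih n (by omega), hermiteP_add_two n]
      push_cast
      simp only [map_add, map_one, map_ofNat]
      ring

lemma hermiteP_coeff_hi (n k : ℕ) (h : n < k) : (hermiteP n).coeff k = 0 :=
  coeff_eq_zero_of_natDegree_lt (by rw [hermiteP_natDegree]; exact h)

lemma hermiteP_coeff_top (n : ℕ) : (hermiteP n).coeff n = 1 := by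
  have := (hermiteP_monic n).coeff_natDegree
  rwa [hermiteP_natDegree] at this

lemma hermiteP_coeff1 (n : ℕ) : (hermiteP (n+1)).coeff n = 0 := by
  induction n with
  | zero => rw [hermiteP_one]; exact coeff_X_zero
  | succ n ih =>
    rw [show n+1+1 = n+2 from rfl, hermiteP_add_two, coeff_sub, coeff_X_mul, coeff_C_mul,
      ih, hermiteP_coeff_hi n (n+1) (by omega)]
    ring

lemma hermiteP_coeff2 (n : ℕ) :
    (hermiteP (n+2)).coeff n = -(((n:ℝ)+2)*((n:ℝ)+1)/2) := by
  induction n with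
  | zero =>
    rw [hermiteP_add_two, hermiteP_one, hermiteP_zero]
    simp
  | succ n ih =>
    rw [show n+1+2 = (n+1)+2 from rfl, hermiteP_add_two, coeff_sub, coeff_X_mul, coeff_C_mul,
      ih, hermiteP_coeff_top (n+1)]
    push_cast; ring

lemma hermiteP_coeff3 (n : ℕ) : (hermiteP (n+3)).coeff n = 0 := by
  induction n with
  | zero =>
    rw [show (3:ℕ) = 1+2 from rfl, hermiteP_add_two, hermiteP_one]
    simp [coeff_sub, mul_coeff_zero]
  | succ n ih =>
    rw [show n+1+3 = (n+2)+2 from rfl, hermiteP_add_two, coeff_sub, coeff_X_mul, coeff_C_mul,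
      show n+2+1 = n+3 from rfl, ih, hermiteP_coeff1 (n+1)]
    ring

lemma hermiteP_coeff4 (n : ℕ) :
    (hermiteP (n+4)).coeff n = ((n:ℝ)+4)*((n:ℝ)+3)*((n:ℝ)+2)*((n:ℝ)+1)/8 := by
  induction n with
  | zero =>
    rw [show (4:ℕ) = 2+2 from rfl, hermiteP_add_two, coeff_sub, coeff_C_mul, hermiteP_coeff2 0,
      mul_coeff_zero, coeff_X_zero]
    norm_num
  | succ n ih =>
    rw [show n+1+4 = (n+3)+2 from rfl, hermiteP_add_two, coeff_sub, coeff_X_mul, coeff_C_mul,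
      show n+3+1 = n+4 from rfl, ih, show n+3 = (n+1)+2 from rfl, hermiteP_coeff2 (n+1)]
    push_cast; ring

lemma myesymm_zero (s : Multiset ℝ) : s.esymm 0 = 1 := by
  simp [Multiset.esymm]

lemma myesymm_cons (a : ℝ) (s : Multiset ℝ) (k : ℕ) :
    (a ::ₘ s).esymm (k+1) = s.esymm (k+1) + a * s.esymm k := by
  rw [Multiset.esymm, Multiset.powersetCard_cons, Multiset.map_add, Multiset.sum_add, Multiset.map_map]
  congr 1
  rw [Multiset.esymm, ← Multiset.sum_map_mul_left]
  congr 1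
  apply Multiset.map_congr rfl
  intro t _
  simp [Multiset.prod_cons]

lemma esymm_eq_zero_of_card_lt (s : Multiset ℝ) (k : ℕ) (h : Multiset.card s < k) :
    s.esymm k = 0 := by
  rw [Multiset.esymm, Multiset.powersetCard_eq_empty _ h]
  simp

lemma newton4 (s : Multiset ℝ) :
    (s.map (fun x => x ^ 1)).sum = s.esymm 1 ∧
    (s.map (fun x => x ^ 2)).sum = s.esymm 1 ^ 2 - 2 * s.esymm 2 ∧
    (s.map (fun x => x ^ 3)).sum
      = s.esymm 1 ^ 3 - 3 * s.esymm 1 * s.esymm 2 + 3 * s.esymm 3 ∧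
    (s.map (fun x => x ^ 4)).sum
      = s.esymm 1 ^ 4 - 4 * s.esymm 1 ^ 2 * s.esymm 2 + 2 * s.esymm 2 ^ 2
        + 4 * s.esymm 1 * s.esymm 3 - 4 * s.esymm 4 := by
  induction s using Multiset.induction with
  | empty =>
    have h : ∀ k, (0 : Multiset ℝ).esymm (k+1) = 0 := fun k =>
      esymm_eq_zero_of_card_lt _ _ (by simp)
    simp [h 0, h 1, h 2, h 3]
  | cons a s ih =>
    obtain ⟨h1, h2, h3, h4⟩ := ih
    simp only [Multiset.map_cons, Multiset.sum_cons, h1, h2, h3, h4,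
      myesymm_cons, myesymm_zero]
    refine ⟨by ring, by ring, by ring, by ring⟩

noncomputable def E (x : ℝ) : ℝ := Real.exp (-(x^2)/2)

lemma E_pos (x : ℝ) : 0 < E x := Real.exp_pos _

lemma hasDerivAt_E (x : ℝ) : HasDerivAt E (-x * E x) x := by
  have h1 : HasDerivAt (fun x : ℝ => -(x^2)/2) (-x) x := by
    have := ((hasDerivAt_pow 2 x).neg).div_const 2
    exact this.congr_deriv (by ring)
  unfold E
  simpa [mul_comm] using h1.exp

lemma tendsto_poly_E_top (p : ℝ[X]) :
    Tendsto (fun x => eval x p * E x) atTop (𝓝 0) := by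
  have h0 : Tendsto (fun x => |eval x p / Real.exp x|) atTop (𝓝 0) := by
    simpa using (p.tendsto_div_exp_atTop).abs
  apply squeeze_zero_norm' _ h0
  filter_upwards [eventually_ge_atTop (2:ℝ)] with x hx
  have hE : E x ≤ Real.exp (-x) := by
    apply Real.exp_le_exp.mpr
    nlinarith
  have : ‖eval x p * E x‖ = |eval x p| * E x := by
    rw [norm_mul, Real.norm_eq_abs, Real.norm_eq_abs, abs_of_pos (E_pos x)]
  rw [this, abs_div, Real.abs_exp, div_eq_mul_inv, ← Real.exp_neg]
  exact mul_le_mul_of_nonneg_left hE (abs_nonneg _)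

lemma tendsto_poly_E_bot (p : ℝ[X]) :
    Tendsto (fun x => eval x p * E x) atBot (𝓝 0) := by
  have h1 := tendsto_poly_E_top (p.comp (-X))
  have h2 : Tendsto (fun x : ℝ => -x) atBot atTop := tendsto_neg_atBot_atTop
  have h3 := h1.comp h2
  convert h3 using 2 with x
  simp [eval_comp, E]

lemma rolle_top_aux {f f' : ℝ → ℝ} (hd : ∀ x, HasDerivAt f (f' x) x) {a c : ℝ} (hac : a < c)
    (ha : f a = 0) (hc : 0 < f c) (hlim : Tendsto f atTop (𝓝 0)) :
    ∃ x, a < x ∧ f' x = 0 := by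
  have hcont : Continuous f := by
    rw [continuous_iff_continuousAt]; exact fun x => (hd x).continuousAt
  obtain ⟨M, hM1, hM2⟩ := ((eventually_ge_atTop (c+1)).and
    (hlim.eventually_lt_const hc)).exists
  have hacM : a < M := by linarith
  obtain ⟨z, hz, hmax⟩ := isCompact_Icc.exists_isMaxOn (Set.nonempty_Icc.mpr hacM.le)
    hcont.continuousOn
  have hcz : f c ≤ f z := hmax ⟨hac.le, by linarith⟩
  have hza : z ≠ a := fun h => by rw [h, ha] at hcz; linarith
  have hzM : z ≠ M := fun h => by rw [h] at hcz; linarith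
  have hzo : z ∈ Set.Ioo a M := ⟨lt_of_le_of_ne hz.1 (Ne.symm hza), lt_of_le_of_ne hz.2 hzM⟩
  refine ⟨z, hzo.1, ?_⟩
  exact (hmax.isLocalMax (Icc_mem_nhds hzo.1 hzo.2)).hasDerivAt_eq_zero (hd z)

lemma rolle_top {f f' : ℝ → ℝ} (hd : ∀ x, HasDerivAt f (f' x) x) {a c : ℝ} (hac : a < c)
    (ha : f a = 0) (hc : f c ≠ 0) (hlim : Tendsto f atTop (𝓝 0)) :
    ∃ x, a < x ∧ f' x = 0 := by
  rcases hc.lt_or_gt with h | h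
  · obtain ⟨x, hx1, hx2⟩ := rolle_top_aux (f := fun x => -f x) (f' := fun x => -f' x)
      (fun x => (hd x).neg) hac (by simp [ha]) (by simpa using h) (by simpa using hlim.neg)
    exact ⟨x, hx1, by linarith [hx2]⟩
  · exact rolle_top_aux hd hac ha h hlim

lemma rolle_bot {f f' : ℝ → ℝ} (hd : ∀ x, HasDerivAt f (f' x) x) {a c : ℝ} (hac : c < a)
    (ha : f a = 0) (hc : f c ≠ 0) (hlim : Tendsto f atBot (𝓝 0)) :
    ∃ x, x < a ∧ f' x = 0 := by
  have hd' : ∀ x, HasDerivAt (fun y => f (-y)) (-f' (-x)) x := by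
    intro x
    simpa [Function.comp_def] using (hd (-x)).comp x (hasDerivAt_neg x)
  have hlim' : Tendsto (fun y => f (-y)) atTop (𝓝 0) := hlim.comp tendsto_neg_atTop_atBot
  obtain ⟨x, hx1, hx2⟩ := rolle_top hd' (a := -a) (c := -c) (by linarith)
    (by simpa using ha) (by simpa using hc) hlim'
  exact ⟨-x, by linarith, by linarith [hx2]⟩

noncomputable def g (n : ℕ) (x : ℝ) : ℝ := eval x (hermiteP n) * E x

lemma hasDerivAt_g (n : ℕ) (x : ℝ) :
    HasDerivAt (g (n+1)) (-(eval x (hermiteP (n+2)) * E x)) x := by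
  have h := ((hermiteP (n+1)).hasDerivAt x).mul (hasDerivAt_E x)
  refine h.congr_deriv ?_
  rw [hermiteP_derivative n, hermiteP_add_two n]
  simp only [eval_mul, eval_sub, eval_C, eval_X]
  ring

lemma hermiteP_roots_toFinset_card (n : ℕ) :
    (hermiteP n).roots.toFinset.card = n := by
  induction n using Nat.strong_induction_on with
  | _ n ih =>
    match n with
    | 0 => show (hermiteP 0).roots.toFinset.card = 0; rw [show hermiteP 0 = 1 from rfl]; simp
    | 1 => show (hermiteP 1).roots.toFinset.card = 1; rw [show hermiteP 1 = X from rfl, roots_X]; simp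
    | (n+2) =>
      have hcard : (hermiteP (n+1)).roots.toFinset.card = n + 1 := ih (n+1) (by omega)
      set s := (hermiteP (n+1)).roots.toFinset with hs
      let e := s.orderIsoOfFin hcard
      set x : Fin (n+1) → ℝ := fun i => (e i : ℝ) with hxdef
      have hxmono : StrictMono x := fun i j hij => by
        exact_mod_cast (Finset.orderIsoOfFin s hcard).strictMono hij
      have hxroot : ∀ i, eval (x i) (hermiteP (n+1)) = 0 := by
        intro i
        have : (x i) ∈ s := (e i).2
        rw [hs, Multiset.mem_toFinset, mem_roots (hermiteP_ne_zero (n+1))] at this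
        exact this
      have hallroots : ∀ y : ℝ, eval y (hermiteP (n+1)) = 0 → ∃ i, x i = y := by
        intro y hy
        have hy' : y ∈ s := by
          rw [hs, Multiset.mem_toFinset, mem_roots (hermiteP_ne_zero (n+1))]; exact hy
        obtain ⟨i, hi⟩ := e.surjective ⟨y, hy'⟩
        exact ⟨i, by rw [hxdef]; exact congrArg Subtype.val hi⟩
      have hg0 : ∀ i, g (n+1) (x i) = 0 := fun i => by
        rw [g, hxroot i, zero_mul]
      -- interior roots
      have hmid : ∀ i : Fin n, ∃ z, z ∈ Set.Ioo (x i.castSucc) (x i.succ) ∧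
          eval z (hermiteP (n+2)) = 0 := by
        intro i
        have hlt : x i.castSucc < x i.succ := hxmono (Fin.castSucc_lt_succ (i := i))
        obtain ⟨z, hz1, hz2⟩ := exists_hasDerivAt_eq_zero hlt
          (fun y _ => ((hasDerivAt_g n y).continuousAt).continuousWithinAt)
          (by rw [hg0, hg0]) (fun y _ => hasDerivAt_g n y)
        refine ⟨z, hz1, ?_⟩
        have hE := (E_pos z).ne'
        have := neg_eq_zero.mp hz2
        exact (mul_eq_zero.mp this).resolve_right hE
      have hnonroot : ∀ y : ℝ, (∀ i, x i ≠ y) → g (n+1) y ≠ 0 := by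
        intro y hy hgy
        have : eval y (hermiteP (n+1)) = 0 :=
          (mul_eq_zero.mp hgy).resolve_right (E_pos y).ne'
        obtain ⟨i, hi⟩ := hallroots y this
        exact hy i hi
      -- top root
      have htop : ∃ z, x (Fin.last n) < z ∧ eval z (hermiteP (n+2)) = 0 := by
        obtain ⟨z, hz1, hz2⟩ := rolle_top (f := g (n+1))
          (f' := fun y => -(eval y (hermiteP (n+2)) * E y)) (hasDerivAt_g n)
          (a := x (Fin.last n)) (c := x (Fin.last n) + 1) (by linarith)
          (hg0 _) (hnonroot _ (fun i h => by
            have := hxmono.monotone (Fin.le_last i); rw [h] at this; linarith))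
          (tendsto_poly_E_top _)
        refine ⟨z, hz1, ?_⟩
        have := neg_eq_zero.mp hz2
        exact (mul_eq_zero.mp this).resolve_right (E_pos z).ne'
      -- bottom root
      have hbot : ∃ z, z < x 0 ∧ eval z (hermiteP (n+2)) = 0 := by
        obtain ⟨z, hz1, hz2⟩ := rolle_bot (f := g (n+1))
          (f' := fun y => -(eval y (hermiteP (n+2)) * E y)) (hasDerivAt_g n)
          (a := x 0) (c := x 0 - 1) (by linarith)
          (hg0 _) (hnonroot _ (fun i h => by
            have := hxmono.monotone (Fin.zero_le i); rw [h] at this; linarith))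
          (tendsto_poly_E_bot _)
        refine ⟨z, hz1, ?_⟩
        have := neg_eq_zero.mp hz2
        exact (mul_eq_zero.mp this).resolve_right (E_pos z).ne'
      obtain ⟨zlo, hzlo, hzlo0⟩ := hbot
      obtain ⟨zhi, hzhi, hzhi0⟩ := htop
      choose zmid hzmid hzmid0 using hmid
      set t := (hermiteP (n+2)).roots.toFinset with ht
      have hmem : ∀ y : ℝ, eval y (hermiteP (n+2)) = 0 → y ∈ t := by
        intro y hy
        rw [ht, Multiset.mem_toFinset, mem_roots (hermiteP_ne_zero (n+2))]
        exact hy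
      -- bounds on zmid
      have hmidlo : ∀ i : Fin n, x i.castSucc < zmid i := fun i => (hzmid i).1
      have hmidhi : ∀ i : Fin n, zmid i < x i.succ := fun i => (hzmid i).2
      have hzmid_inj : Function.Injective zmid := by
        intro i j hij
        by_contra hne
        rcases lt_or_gt_of_ne (fun h : i = j => hne h) with h | h
        · have h1 : x i.succ ≤ x j.castSucc := hxmono.monotone (by
            rw [Fin.le_def, Fin.val_succ, Fin.coe_castSucc]; exact h)
          have := (hmidhi i).trans_le (h1.trans (hmidlo j).le)
          rw [hij] at this; exact lt_irrefl _ this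
        · have h1 : x j.succ ≤ x i.castSucc := hxmono.monotone (by
            rw [Fin.le_def, Fin.val_succ, Fin.coe_castSucc]; exact h)
          have := (hmidhi j).trans_le (h1.trans (hmidlo i).le)
          rw [hij] at this; exact lt_irrefl _ this
      have hmid_lt_hi : ∀ i : Fin n, zmid i < zhi := fun i =>
        (hmidhi i).trans_le ((hxmono.monotone (Fin.le_last _)).trans hzhi.le)
      have hlo_lt_mid : ∀ i : Fin n, zlo < zmid i := fun i =>
        hzlo.trans_le ((hxmono.monotone (Fin.zero_le _)).trans_lt (hmidlo i)).le
      have hlo_lt_hi : zlo < zhi :=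
        hzlo.trans ((hxmono.monotone (Fin.zero_le (Fin.last n))).trans_lt hzhi)
      set F : Finset ℝ := insert zlo (insert zhi (Finset.univ.image zmid)) with hF
      have hFsub : F ⊆ t := by
        intro y hy
        rw [hF] at hy
        simp only [Finset.mem_insert, Finset.mem_image, Finset.mem_univ, true_and] at hy
        rcases hy with rfl | rfl | ⟨i, rfl⟩
        · exact hmem _ hzlo0
        · exact hmem _ hzhi0
        · exact hmem _ (hzmid0 i)
      have hFcard : F.card = n + 2 := by
        rw [hF, Finset.card_insert_of_notMem, Finset.card_insert_of_notMem,
          Finset.card_image_of_injective _ hzmid_inj, Finset.card_univ, Fintype.card_fin]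
        · simp only [Finset.mem_image, Finset.mem_univ, true_and, not_exists]
          intro i h
          exact absurd h (ne_of_lt (hmid_lt_hi i))
        · simp only [Finset.mem_insert, Finset.mem_image, Finset.mem_univ, true_and,
            not_or, not_exists]
          exact ⟨ne_of_lt hlo_lt_hi, fun i h => absurd h (ne_of_gt (hlo_lt_mid i))⟩
      have hle : n + 2 ≤ t.card := hFcard ▸ Finset.card_le_card hFsub
      have hge : t.card ≤ n + 2 := by
        calc t.card ≤ Multiset.card (hermiteP (n+2)).roots := Multiset.toFinset_card_le _
          _ ≤ (hermiteP (n+2)).natDegree := card_roots' _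
          _ = n + 2 := hermiteP_natDegree (n+2)
      show t.card = n + 2
      omega

lemma hermiteP_roots_card (n : ℕ) : Multiset.card (hermiteP n).roots = n := by
  have h1 : Multiset.card (hermiteP n).roots ≤ n := by
    have := card_roots' (hermiteP n); rwa [hermiteP_natDegree] at this
  have h2 : n ≤ Multiset.card (hermiteP n).roots := by
    have := Multiset.toFinset_card_le (hermiteP n).roots
    rw [hermiteP_roots_toFinset_card] at this; exact this
  omega

lemma hermiteP_roots_esymm (n k : ℕ) (hk : k ≤ n) :
    (hermiteP n).roots.esymm k = (-1)^k * (hermiteP n).coeff (n - k) := by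
  have h := Polynomial.coeff_eq_esymm_roots_of_card (p := hermiteP n)
    (by rw [hermiteP_roots_card, hermiteP_natDegree]) (k := n - k)
    (by rw [hermiteP_natDegree]; omega)
  rw [hermiteP_natDegree, (hermiteP_monic n).leadingCoeff, one_mul,
    show n - (n - k) = k by omega] at h
  rw [h, ← mul_assoc, ← pow_add, Even.neg_one_pow ⟨k, rfl⟩, one_mul]

/-- The sum of the fourth powers of the roots of `H n` equals `2n³ - 5n² + 3n`. -/
theorem hermite_powerSum_four (n : ℕ) :
    (((hermiteP n).roots).map (fun x => x ^ 4)).sum =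
      2 * (n : ℝ) ^ 3 - 5 * (n : ℝ) ^ 2 + 3 * n := by
  set s := (hermiteP n).roots with hs
  have hcard : Multiset.card s = n := hermiteP_roots_card n
  have he1 : s.esymm 1 = 0 := by
    match n, hcard with
    | 0, hcard => exact esymm_eq_zero_of_card_lt s 1 (by omega)
    | (m+1), hcard =>
      rw [hs, hermiteP_roots_esymm (m+1) 1 (by omega), show m+1-1 = m by omega,
        hermiteP_coeff1 m, mul_zero]
  have he2 : s.esymm 2 = -((n:ℝ)*((n:ℝ)-1)/2) := by
    match n, hcard with
    | 0, hcard =>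
      rw [esymm_eq_zero_of_card_lt s 2 (by omega)]; norm_num
    | 1, hcard =>
      rw [esymm_eq_zero_of_card_lt s 2 (by omega)]; norm_num
    | (m+2), hcard =>
      rw [hs, hermiteP_roots_esymm (m+2) 2 (by omega), show m+2-2 = m by omega,
        hermiteP_coeff2 m]
      push_cast; ring
  have he3 : s.esymm 3 = 0 := by
    match n, hcard with
    | 0, hcard => exact esymm_eq_zero_of_card_lt s 3 (by omega)
    | 1, hcard => exact esymm_eq_zero_of_card_lt s 3 (by omega)
    | 2, hcard => exact esymm_eq_zero_of_card_lt s 3 (by omega)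
    | (m+3), hcard =>
      rw [hs, hermiteP_roots_esymm (m+3) 3 (by omega), show m+3-3 = m by omega,
        hermiteP_coeff3 m, mul_zero]
  have he4 : s.esymm 4 = (n:ℝ)*((n:ℝ)-1)*((n:ℝ)-2)*((n:ℝ)-3)/8 := by
    match n, hcard with
    | 0, hcard => rw [esymm_eq_zero_of_card_lt s 4 (by omega)]; norm_num
    | 1, hcard => rw [esymm_eq_zero_of_card_lt s 4 (by omega)]; norm_num
    | 2, hcard => rw [esymm_eq_zero_of_card_lt s 4 (by omega)]; norm_num
    | 3, hcard => rw [esymm_eq_zero_of_card_lt s 4 (by omega)]; norm_num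
    | (m+4), hcard =>
      rw [hs, hermiteP_roots_esymm (m+4) 4 (by omega), show m+4-4 = m by omega,
        hermiteP_coeff4 m]
      push_cast; ring
  have h4 := (newton4 s).2.2.2
  rw [h4, he1, he2, he3, he4]
  ring
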